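/- arXiv:1611.00269 — 3 statements merged into one kernel-verified Lean document; each statement's English description precedes it below -/
import Mathlib

section
/- Let R = ℝ[x₁,…,xₙ], let 𝔞, 𝔞′ be homogeneous ideals of R, and let f ∈ R be a homogeneous polynomial of degree k with f ∉ 𝔞. Suppose 𝔞′ ⊆ 𝔞 : f. If R/𝔞′ is a Poincaré duality algebra of socle degree r and R/𝔞 is a Poincaré duality algebra of socle degree r + k, then 𝔞′ = 𝔞 : f. -/
open MvPolynomial

noncomputable section

/-- `R/I` is a Poincaré duality algebra of socle degree `r`, phrased in terms of the
homogeneous ideal `I` of the polynomial ring `R = ℝ[x₁,…,xₙ]`: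
all homogeneous elements of degree `> r` lie in `I`, the degree-`r` part of the quotient is
one-dimensional (nonzero), and the multiplication pairing
`(R/I)_q × (R/I)_{r-q} → (R/I)_r` is non-degenerate. -/
def IsPDIdeal (n : ℕ) (I : Ideal (MvPolynomial (Fin n) ℝ)) (r : ℕ) : Prop :=
  (∀ f : MvPolynomial (Fin n) ℝ, ∀ d : ℕ, r < d → f.IsHomogeneous d → f ∈ I) ∧
  (∃ f : MvPolynomial (Fin n) ℝ, f.IsHomogeneous r ∧ f ∉ I) ∧
  (∀ f g : MvPolynomial (Fin n) ℝ, f.IsHomogeneous r → g.IsHomogeneous r → f ∉ I →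
    ∃ c : ℝ, g - c • f ∈ I) ∧
  (∀ q : ℕ, q ≤ r → ∀ f : MvPolynomial (Fin n) ℝ, f.IsHomogeneous q → f ∉ I →
    ∃ g : MvPolynomial (Fin n) ℝ, g.IsHomogeneous (r - q) ∧ f * g ∉ I)

/-!
Since `f` and `𝔞` are homogeneous, so is `J = 𝔞 : f`, and `J/𝔞'` is a homogeneous ideal of the
Poincaré duality algebra `R/𝔞'`. Pairing `f` into the socle of `R/𝔞` gives `w` of degree `r`
with `w f ∉ 𝔞`, i.e. `w ∉ J`. If some homogeneous `g ∈ J` were not in `𝔞'`, duality would give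
`h` with `g h` spanning the one-dimensional socle of `R/𝔞'`, so `w ≡ c g h` modulo `𝔞' ⊆ J`
and hence `w ∈ J`. Thus `J` and `𝔞'` have the same homogeneous elements, so they are equal.
-/

namespace MvPolynomial

variable {σ R : Type*} [CommSemiring R]

theorem mem_of_forall_homogeneousComponent_mem {I : Ideal (MvPolynomial σ R)}
    {g : MvPolynomial σ R} (h : ∀ d, homogeneousComponent d g ∈ I) : g ∈ I := by
  rw [← sum_homogeneousComponent g]
  exact Ideal.sum_mem _ fun d _ => h d

theorem homogeneousComponent_add_mul_of_isHomogeneous {f : MvPolynomial σ R} {k : ℕ}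
    (hf : f.IsHomogeneous k) (g : MvPolynomial σ R) (d : ℕ) :
    homogeneousComponent (d + k) (g * f) = homogeneousComponent d g * f := by
  conv_lhs => rw [← sum_homogeneousComponent g, Finset.sum_mul, map_sum]
  simp only [homogeneousComponent_of_mem ((homogeneousComponent_isHomogeneous _ g).mul hf),
    Nat.add_right_cancel_iff, Finset.sum_ite_eq, Finset.mem_range]
  split_ifs with hd
  · rfl
  · rw [homogeneousComponent_eq_zero _ _ (by omega), zero_mul]

theorem homogeneousComponent_mem_colon {I : Ideal (MvPolynomial σ R)}
    (hI : ∀ p ∈ I, ∀ d, homogeneousComponent d p ∈ I) {f : MvPolynomial σ R} {k : ℕ}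
    (hf : f.IsHomogeneous k) {g : MvPolynomial σ R} (hg : g ∈ I.colon (Ideal.span {f}))
    (d : ℕ) : homogeneousComponent d g ∈ I.colon (Ideal.span {f}) := by
  rw [Ideal.mem_colon_span_singleton] at hg ⊢
  rw [← homogeneousComponent_add_mul_of_isHomogeneous hf]
  exact hI _ hg _

end MvPolynomial

namespace IsPDIdeal

variable {n r : ℕ} {I J : Ideal (MvPolynomial (Fin n) ℝ)}

theorem mem_of_le_of_isHomogeneous (hI : IsPDIdeal n I r) (hIJ : I ≤ J)
    {w : MvPolynomial (Fin n) ℝ} (hw : w.IsHomogeneous r) (hwJ : w ∉ J)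
    {g : MvPolynomial (Fin n) ℝ} {d : ℕ} (hg : g.IsHomogeneous d) (hgJ : g ∈ J) : g ∈ I := by
  by_contra hgI
  have hdr : d ≤ r := by
    by_contra! hrd
    exact hgI (hI.1 g d hrd hg)
  obtain ⟨h, hh, hghI⟩ := hI.2.2.2 d hdr g hg hgI
  have hgh : (g * h).IsHomogeneous r := by simpa [Nat.add_sub_cancel' hdr] using hg.mul hh
  obtain ⟨c, hc⟩ := hI.2.2.1 (g * h) w hgh hw hghI
  refine hwJ ?_
  simpa using J.add_mem (hIJ hc) (J.smul_of_tower_mem c (J.mul_mem_right h hgJ))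

theorem eq_of_le (hI : IsPDIdeal n I r) (hIJ : I ≤ J)
    (hJ : ∀ p ∈ J, ∀ d, homogeneousComponent d p ∈ J)
    {w : MvPolynomial (Fin n) ℝ} (hw : w.IsHomogeneous r) (hwJ : w ∉ J) : I = J :=
  le_antisymm hIJ fun g hg => mem_of_forall_homogeneousComponent_mem fun d =>
    hI.mem_of_le_of_isHomogeneous hIJ hw hwJ (homogeneousComponent_isHomogeneous d g) (hJ g hg d)

end IsPDIdeal

theorem statement0_general (n : ℕ) (𝔞 𝔞' : Ideal (MvPolynomial (Fin n) ℝ))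
    (h𝔞hom : ∀ f ∈ 𝔞, ∀ d : ℕ, homogeneousComponent d f ∈ 𝔞)
    (f : MvPolynomial (Fin n) ℝ) (k : ℕ) (hf : f.IsHomogeneous k) (hf𝔞 : f ∉ 𝔞)
    (hsub : 𝔞' ≤ 𝔞.colon (Ideal.span {f}))
    (r : ℕ) (hPD' : IsPDIdeal n 𝔞' r) (hPD : IsPDIdeal n 𝔞 (r + k)) :
    𝔞' = 𝔞.colon (Ideal.span {f}) := by
  obtain ⟨w, hw, hfw⟩ := hPD.2.2.2 k (Nat.le_add_left k r) f hf hf𝔞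
  rw [Nat.add_sub_cancel] at hw
  refine hPD'.eq_of_le hsub (fun g hg d => homogeneousComponent_mem_colon h𝔞hom hf hg d) hw ?_
  rwa [Ideal.mem_colon_span_singleton, mul_comm]

/-- if `𝔞' ⊆ 𝔞 : f` for a homogeneous `f ∉ 𝔞` of degree `k`, and `R/𝔞'` is a
Poincaré duality algebra of socle degree `r` while `R/𝔞` is one of socle degree `r + k`,
then `𝔞' = 𝔞 : f`. -/
theorem statement0 (n : ℕ) (𝔞 𝔞' : Ideal (MvPolynomial (Fin n) ℝ))
    (h𝔞hom : ∀ f ∈ 𝔞, ∀ d : ℕ, homogeneousComponent d f ∈ 𝔞)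
    (h𝔞'hom : ∀ f ∈ 𝔞', ∀ d : ℕ, homogeneousComponent d f ∈ 𝔞')
    (f : MvPolynomial (Fin n) ℝ) (k : ℕ) (hf : f.IsHomogeneous k) (hf𝔞 : f ∉ 𝔞)
    (hsub : 𝔞' ≤ 𝔞.colon (Ideal.span {f}))
    (r : ℕ) (hPD' : IsPDIdeal n 𝔞' r) (hPD : IsPDIdeal n 𝔞 (r + k)) :
    𝔞' = 𝔞.colon (Ideal.span {f}) :=
  statement0_general n 𝔞 𝔞' h𝔞hom f k hf hf𝔞 hsub r hPD' hPD
end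
end

section
/- For the braid/type A_{n−1} setting, let h : {1,…,n} → {1,…,n} be a Hessenberg function (i ≤ h(i) and h weakly increasing), and for 1 ≤ i ≤ j ≤ n define ψ^A_{i,j} = ∑_{k=1}^{i} (∏_{ℓ=i+1}^{j} (x_k − x_ℓ)) (∂_k − (1/n)(∂₁+⋯+∂ₙ)). Then for every root x_p − x_q with p < q ≤ h(p) and every i, the polynomial ψ^A_{i,h(i)}(x_p − x_q) is divisible by x_p − x_q. -/
open MvPolynomial

noncomputable section

/-- The derivation `ψ^A_{i,j} = ∑_{k=1}^{i} (∏_{ℓ=i+1}^{j} (x_k − x_ℓ)) (∂_k − (1/n)∂̄)`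
of type `A_{n-1}`, applied to a polynomial `p`; here `∂̄ = ∂₁ + ⋯ + ∂ₙ`. -/
def psiA (n i j : ℕ) (p : MvPolynomial ℕ ℝ) : MvPolynomial ℕ ℝ :=
  ∑ k ∈ Finset.Icc 1 i,
    (∏ l ∈ Finset.Icc (i + 1) j, (X k - X l)) *
      (pderiv k p - C ((n : ℝ)⁻¹) * ∑ m ∈ Finset.Icc 1 n, pderiv m p)

/-! Since `∂̄(x_p − x_q) = 0` whenever `p, q` both lie in `[1, n]` or both do not (and `q ≤ h p ≤ n`
guarantees this), `ψ^A_{i,j}(x_p − x_q) = [p ≤ i] P(x_p) − [q ≤ i] P(x_q)` with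
`P(t) = ∏_{ℓ=i+1}^{j} (t − x_ℓ)`. If `q ≤ i` this is `P(x_p) − P(x_q)`, divisible by `x_p − x_q`;
if `p ≤ i < q` then `i < q ≤ h p ≤ h i`, so `x_p − x_q` is a factor of `P(x_p)`; otherwise it is `0`. -/

lemma sub_dvd_prod_sub_sub_prod_sub {R ι : Type*} [CommRing R] (a b : R) (s : Finset ι)
    (c : ι → R) : a - b ∣ ∏ l ∈ s, (a - c l) - ∏ l ∈ s, (b - c l) := by
  have key := Polynomial.sub_dvd_eval_sub a b (∏ l ∈ s, (Polynomial.X - Polynomial.C (c l)))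
  simpa only [Polynomial.eval_prod, Polynomial.eval_sub, Polynomial.eval_X, Polynomial.eval_C]
    using key

lemma sum_pderiv_X {σ R : Type*} [CommSemiring R] [DecidableEq σ] (s : Finset σ) (p : σ) :
    ∑ m ∈ s, pderiv m (X p : MvPolynomial σ R) = if p ∈ s then 1 else 0 := by
  simp [Pi.single_apply]

lemma psiA_X_sub_X {n p q : ℕ} (hpq : p ∈ Finset.Icc 1 n ↔ q ∈ Finset.Icc 1 n) (i j : ℕ) :
    psiA n i j (X p - X q) =
      (if p ∈ Finset.Icc 1 i then ∏ l ∈ Finset.Icc (i + 1) j, (X p - X l) else 0) -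
        (if q ∈ Finset.Icc 1 i then ∏ l ∈ Finset.Icc (i + 1) j, (X q - X l) else 0) := by
  have htotal : ∑ m ∈ Finset.Icc 1 n, pderiv m (X p - X q : MvPolynomial ℕ ℝ) = 0 := by
    simp only [map_sub, Finset.sum_sub_distrib, sum_pderiv_X, hpq, sub_self]
  rw [psiA, htotal]
  simp only [mul_zero, sub_zero, map_sub, pderiv_X, Pi.single_apply, mul_sub,
    Finset.sum_sub_distrib, mul_ite, mul_one, Finset.sum_ite_eq]

lemma monotoneOn_nat_Icc_of_le_succ {β : Type*} [Preorder β] {f : ℕ → β} {a b : ℕ}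
    (hf : ∀ i, a ≤ i → i < b → f i ≤ f (i + 1)) : MonotoneOn f (Set.Icc a b) :=
  monotoneOn_of_le_succ Set.ordConnected_Icc fun i _ hi hi' =>
    hf i hi.1 (Order.succ_le_iff.mp hi'.2)

theorem statement5_general (n : ℕ) (h : ℕ → ℕ)
    (hh1 : ∀ i ∈ Finset.Icc 1 n, i ≤ h i ∧ h i ≤ n)
    (hh2 : ∀ i, 1 ≤ i → i < n → h i ≤ h (i + 1))
    (p q : ℕ) (hp : 1 ≤ p) (hpq : p < q) (hq : q ≤ h p) :
    ∀ i ∈ Finset.Icc 1 n,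
      psiA n i (h i) (X p - X q) ∈ Ideal.span {(X p - X q : MvPolynomial ℕ ℝ)} := by
  intro i hi
  have hqn : p ∈ Finset.Icc 1 n → q ≤ n := fun hpn => hq.trans (hh1 p hpn).2
  have hmem_iff : p ∈ Finset.Icc 1 n ↔ q ∈ Finset.Icc 1 n := by
    simp only [Finset.mem_Icc] at hqn ⊢
    omega
  rw [psiA_X_sub_X hmem_iff, Ideal.mem_span_singleton]
  simp only [Finset.mem_Icc, hp, true_and, show 1 ≤ q by omega]
  by_cases hqi : q ≤ i
  · rw [if_pos (hpq.le.trans hqi), if_pos hqi]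
    exact sub_dvd_prod_sub_sub_prod_sub _ _ _ _
  by_cases hpi : p ≤ i
  · have hhpi : h p ≤ h i := monotoneOn_nat_Icc_of_le_succ hh2
      (Set.mem_Icc.mpr ⟨hp, hpi.trans (Finset.mem_Icc.mp hi).2⟩) (Finset.mem_Icc.mp hi) hpi
    rw [if_pos hpi, if_neg hqi, sub_zero]
    exact Finset.dvd_prod_of_mem (fun l => X p - X l)
      (Finset.mem_Icc.mpr ⟨by omega, hq.trans hhpi⟩)
  · rw [if_neg hpi, if_neg hqi, sub_zero]
    exact dvd_zero _

/-- for a Hessenberg function `h` of type `A_{n-1}` and any root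
`x_p − x_q` with `p < q ≤ h(p)`, the polynomial `ψ^A_{i,h(i)}(x_p − x_q)` is divisible
by `x_p − x_q`, for every `i`. -/
theorem statement5 (n : ℕ) (hn : 2 ≤ n) (h : ℕ → ℕ)
    (hh1 : ∀ i ∈ Finset.Icc 1 n, i ≤ h i ∧ h i ≤ n)
    (hh2 : ∀ i, 1 ≤ i → i < n → h i ≤ h (i + 1))
    (p q : ℕ) (hp : 1 ≤ p) (hpq : p < q) (hq : q ≤ h p) :
    ∀ i ∈ Finset.Icc 1 n,
      psiA n i (h i) (X p - X q) ∈ Ideal.span {(X p - X q : MvPolynomial ℕ ℝ)} :=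
  statement5_general n h hh1 hh2 p q hp hpq hq
end
end

section
/- Let I ⊆ Φ⁺ be a lower ideal and 𝒜_I = { ker α | α ∈ I } the associated ideal arrangement in the Cartan subalgebra 𝔱. The map f sending a chamber C of 𝒜_I to the set f(C) = { α ∈ I | α(C) < 0 } is injective from the set of chambers C(𝒜_I) into the set of Weyl type subsets of I, and every subset of the form N(w) ∩ I (w ∈ W) lies in the image; in particular, using that every Weyl type subset has this form, f is a bijection and |C(𝒜_I)| = |𝒲^I|. -/
noncomputable section

variable (n : ℕ)

/-- The complement of the ideal arrangement `𝒜_I` in `𝔱 = ℝⁿ`. -/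
def idealComplement (I : Finset (Module.Dual ℝ (Fin n → ℝ))) : Set (Fin n → ℝ) :=
  {x | ∀ α ∈ I, α x ≠ 0}

/-- The set of chambers of the ideal arrangement `𝒜_I`. -/
def chambers (I : Finset (Module.Dual ℝ (Fin n → ℝ))) : Set (Set (Fin n → ℝ)) :=
  {C | ∃ x ∈ idealComplement n I, C = connectedComponentIn (idealComplement n I) x}

/-- The map `f` from chambers to subsets of `I`: `f(C) = { α ∈ I | α(C) < 0 }`. -/
def chamberLabel (I : Finset (Module.Dual ℝ (Fin n → ℝ))) (C : Set (Fin n → ℝ)) :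
    Set (Module.Dual ℝ (Fin n → ℝ)) :=
  {α | α ∈ I ∧ ∀ x ∈ C, α x < 0}

/-- The collection `𝒲^I` of Weyl type subsets of `I`. -/
def weylTypeSubsets (I : Finset (Module.Dual ℝ (Fin n → ℝ))) :
    Set (Set (Module.Dual ℝ (Fin n → ℝ))) :=
  {Y | Y ⊆ ↑I ∧
    (∀ α ∈ Y, ∀ β ∈ Y, α + β ∈ I → α + β ∈ Y) ∧
    (∀ γ ∈ (↑I : Set (Module.Dual ℝ (Fin n → ℝ))) \ Y,
      ∀ δ ∈ (↑I : Set (Module.Dual ℝ (Fin n → ℝ))) \ Y, γ + δ ∈ I → γ + δ ∉ Y)}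

/-- The set `N(w) ∩ I = { α ∈ I | w(α) ≺ 0 }`, where `w` acts on a linear form `α`
by `w(α) = α ∘ w⁻¹` and `w(α) ≺ 0` means `−w(α)` is a positive root. -/
def invSetCapI (Φp I : Finset (Module.Dual ℝ (Fin n → ℝ)))
    (w : (Fin n → ℝ) ≃ₗ[ℝ] (Fin n → ℝ)) : Set (Module.Dual ℝ (Fin n → ℝ)) :=
  {α | α ∈ I ∧ -(α.comp ((w⁻¹ : (Fin n → ℝ) ≃ₗ[ℝ] (Fin n → ℝ)) :
      (Fin n → ℝ) →ₗ[ℝ] (Fin n → ℝ))) ∈ Φp}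


section Aux
variable {n : ℕ}

lemma sign_const {I : Finset (Module.Dual ℝ (Fin n → ℝ))} {x : Fin n → ℝ}
    (hx : x ∈ idealComplement n I) {α : Module.Dual ℝ (Fin n → ℝ)} (hα : α ∈ I)
    {y : Fin n → ℝ} (hy : y ∈ connectedComponentIn (idealComplement n I) x) :
    (α x < 0 ∧ α y < 0) ∨ (0 < α x ∧ 0 < α y) := by
  have hxC : x ∈ connectedComponentIn (idealComplement n I) x := mem_connectedComponentIn hx
  have hsub : connectedComponentIn (idealComplement n I) x ⊆ idealComplement n I :=
    connectedComponentIn_subset _ _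
  have hpre : IsPreconnected (connectedComponentIn (idealComplement n I) x) :=
    isPreconnected_connectedComponentIn
  have hxne : α x ≠ 0 := hx α hα
  have hyne : α y ≠ 0 := hsub hy α hα
  have hcont : ContinuousOn α (connectedComponentIn (idealComplement n I) x) :=
    (LinearMap.continuous_of_finiteDimensional α).continuousOn
  rcases hxne.lt_or_gt with h1 | h1 <;> rcases hyne.lt_or_gt with h2 | h2
  · exact Or.inl ⟨h1, h2⟩
  · obtain ⟨z, hz, hz0⟩ := hpre.intermediate_value hxC hy hcont ⟨h1.le, h2.le⟩
    exact absurd hz0 (hsub hz α hα)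
  · obtain ⟨z, hz, hz0⟩ := hpre.intermediate_value hy hxC hcont ⟨h2.le, h1.le⟩
    exact absurd hz0 (hsub hz α hα)
  · exact Or.inr ⟨h1, h2⟩

def signSet (I : Finset (Module.Dual ℝ (Fin n → ℝ))) (x : Fin n → ℝ) : Set (Fin n → ℝ) :=
  {y | ∀ α ∈ I, (α x < 0 → α y < 0) ∧ (0 < α x → 0 < α y)}

lemma convex_signSet (I : Finset (Module.Dual ℝ (Fin n → ℝ))) (x : Fin n → ℝ) :
    Convex ℝ (signSet I x) := by
  intro y hy z hz a b ha hb hab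
  intro α hα
  have hval : α (a • y + b • z) = a * α y + b * α z := by
    simp [map_add, map_smul, smul_eq_mul]
  have hcase : 0 < a ∨ 0 < b := by
    by_contra hc; push_neg at hc; linarith [hc.1, hc.2]
  constructor
  · intro h
    have h1 := (hy α hα).1 h
    have h2 := (hz α hα).1 h
    rw [hval]
    rcases hcase with h3 | h3
    · nlinarith [mul_neg_of_pos_of_neg h3 h1, mul_nonpos_of_nonneg_of_nonpos hb h2.le]
    · nlinarith [mul_neg_of_pos_of_neg h3 h2, mul_nonpos_of_nonneg_of_nonpos ha h1.le]
  · intro h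
    have h1 := (hy α hα).2 h
    have h2 := (hz α hα).2 h
    rw [hval]
    rcases hcase with h3 | h3
    · nlinarith [mul_pos h3 h1, mul_nonneg hb h2.le]
    · nlinarith [mul_pos h3 h2, mul_nonneg ha h1.le]


lemma signSet_subset {I : Finset (Module.Dual ℝ (Fin n → ℝ))} {x : Fin n → ℝ}
    (hx : x ∈ idealComplement n I) : signSet I x ⊆ idealComplement n I := by
  intro y hy α hα
  rcases (hx α hα).lt_or_gt with h | h
  · exact ne_of_lt ((hy α hα).1 h)
  · exact ne_of_gt ((hy α hα).2 h)

lemma mem_signSet_self (I : Finset (Module.Dual ℝ (Fin n → ℝ))) (x : Fin n → ℝ) :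
    x ∈ signSet I x := fun α _ => ⟨id, id⟩

lemma label_iff {I : Finset (Module.Dual ℝ (Fin n → ℝ))} {x : Fin n → ℝ}
    (hx : x ∈ idealComplement n I) {α : Module.Dual ℝ (Fin n → ℝ)} (hα : α ∈ I) :
    α ∈ chamberLabel n I (connectedComponentIn (idealComplement n I) x) ↔ α x < 0 := by
  constructor
  · intro ⟨_, h⟩; exact h x (mem_connectedComponentIn hx)
  · intro h
    refine ⟨hα, fun y hy => ?_⟩
    rcases sign_const hx hα hy with ⟨_, h2⟩ | ⟨h1, _⟩
    · exact h2
    · linarith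

end Aux

/-- for a lower ideal `I ⊆ Φ⁺`, the map `C ↦ f(C) = {α ∈ I | α(C) < 0}` is
injective on the chambers of the ideal arrangement `𝒜_I`, every set `N(w) ∩ I` (for `w`
in the Weyl group `W`) is in its image; in particular, if every Weyl type subset of `I`
is of the form `N(w) ∩ I` (Sommers–Tymoczko), then `f` is a bijection from the chambers
onto the Weyl type subsets and `|C(𝒜_I)| = |𝒲^I|`. -/
theorem statement16
    (Φp : Finset (Module.Dual ℝ (Fin n → ℝ)))
    (W : Subgroup ((Fin n → ℝ) ≃ₗ[ℝ] (Fin n → ℝ)))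
    (hstab : ∀ w ∈ W, ∀ α ∈ Φp,
      α.comp ((w⁻¹ : (Fin n → ℝ) ≃ₗ[ℝ] (Fin n → ℝ)) : (Fin n → ℝ) →ₗ[ℝ] (Fin n → ℝ)) ∈ Φp ∨
      -(α.comp ((w⁻¹ : (Fin n → ℝ) ≃ₗ[ℝ] (Fin n → ℝ)) :
          (Fin n → ℝ) →ₗ[ℝ] (Fin n → ℝ))) ∈ Φp)
    (hfund : ∃ x₀ : Fin n → ℝ, ∀ α ∈ Φp, 0 < α x₀)
    (Δ : Finset (Module.Dual ℝ (Fin n → ℝ)))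
    (I : Finset (Module.Dual ℝ (Fin n → ℝ))) (hIsub : I ⊆ Φp)
    (hlower : ∀ α ∈ Φp, ∀ β ∈ I,
      β - α ∈ AddSubmonoid.closure (Δ : Set (Module.Dual ℝ (Fin n → ℝ))) → α ∈ I) :
    Set.InjOn (chamberLabel n I) (chambers n I) ∧
    (∀ w ∈ W, ∃ C ∈ chambers n I, chamberLabel n I C = invSetCapI n Φp I w) ∧
    ((∀ Y ∈ weylTypeSubsets n I, ∃ w ∈ W, Y = invSetCapI n Φp I w) →
      Set.BijOn (chamberLabel n I) (chambers n I) (weylTypeSubsets n I) ∧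
      Nat.card (chambers n I) = Nat.card (weylTypeSubsets n I)) := by
  obtain ⟨x₀, hx₀⟩ := hfund
  have hinj : Set.InjOn (chamberLabel n I) (chambers n I) := by
    rintro C ⟨x, hx, rfl⟩ C' ⟨x', hx', rfl⟩ hlab
    have hsub : connectedComponentIn (idealComplement n I) x' ⊆ signSet I x := by
      intro y hy α hα
      have hsign : α x < 0 ↔ α x' < 0 := by
        rw [← label_iff hx hα, ← label_iff hx' hα, hlab]
      constructor
      · intro h
        rcases sign_const hx' hα hy with ⟨_, h2⟩ | ⟨h1, _⟩
        · exact h2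
        · exact absurd (hsign.mp h) (by linarith)
      · intro h
        rcases sign_const hx' hα hy with ⟨h1, _⟩ | ⟨_, h2⟩
        · exact absurd (hsign.mpr h1) (by linarith)
        · exact h2
    have hss : signSet I x ⊆ connectedComponentIn (idealComplement n I) x :=
      ((convex_signSet I x).isPreconnected).subset_connectedComponentIn
        (mem_signSet_self I x) (signSet_subset hx)
    have hx'mem : x' ∈ connectedComponentIn (idealComplement n I) x :=
      hss (hsub (mem_connectedComponentIn hx'))
    exact connectedComponentIn_eq hx'mem
  have hsurj : ∀ w ∈ W, ∃ C ∈ chambers n I, chamberLabel n I C = invSetCapI n Φp I w := by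
    intro w hw
    set x : Fin n → ℝ := w⁻¹ x₀ with hxdef
    have hval : ∀ α : Module.Dual ℝ (Fin n → ℝ),
        (α.comp ((w⁻¹ : (Fin n → ℝ) ≃ₗ[ℝ] (Fin n → ℝ)) :
          (Fin n → ℝ) →ₗ[ℝ] (Fin n → ℝ))) x₀ = α x := fun α => rfl
    have hsigns : ∀ α ∈ I,
        (α x < 0 ∧ -(α.comp ((w⁻¹ : (Fin n → ℝ) ≃ₗ[ℝ] (Fin n → ℝ)) :
            (Fin n → ℝ) →ₗ[ℝ] (Fin n → ℝ))) ∈ Φp) ∨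
        (0 < α x ∧ -(α.comp ((w⁻¹ : (Fin n → ℝ) ≃ₗ[ℝ] (Fin n → ℝ)) :
            (Fin n → ℝ) →ₗ[ℝ] (Fin n → ℝ))) ∉ Φp) := by
      intro α hα
      rcases hstab w hw α (hIsub hα) with h | h
      · have h1 : 0 < α x := by have h2 := hx₀ _ h; rwa [hval] at h2
        refine Or.inr ⟨h1, fun hc => ?_⟩
        have h2 := hx₀ _ hc
        rw [LinearMap.neg_apply, hval] at h2
        linarith
      · have h2 := hx₀ _ h
        rw [LinearMap.neg_apply, hval] at h2
        exact Or.inl ⟨by linarith, h⟩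
    have hxmem : x ∈ idealComplement n I := by
      intro α hα
      rcases hsigns α hα with ⟨h, _⟩ | ⟨h, _⟩
      · exact ne_of_lt h
      · exact ne_of_gt h
    refine ⟨connectedComponentIn (idealComplement n I) x, ⟨x, hxmem, rfl⟩, ?_⟩
    ext α
    constructor
    · rintro ⟨hαI, hneg⟩
      refine ⟨hαI, ?_⟩
      rcases hsigns α hαI with ⟨_, h⟩ | ⟨h1, _⟩
      · exact h
      · exact absurd (hneg x (mem_connectedComponentIn hxmem)) (by linarith)
    · rintro ⟨hαI, h⟩
      refine ⟨hαI, fun y hy => ?_⟩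
      rcases hsigns α hαI with ⟨h1, _⟩ | ⟨_, h2⟩
      · rcases sign_const hxmem hαI hy with ⟨_, hn⟩ | ⟨hp, _⟩
        · exact hn
        · linarith
      · exact absurd h h2
  refine ⟨hinj, hsurj, fun hST => ?_⟩
  have hmaps : Set.MapsTo (chamberLabel n I) (chambers n I) (weylTypeSubsets n I) := by
    rintro C ⟨x, hx, rfl⟩
    have hxC := mem_connectedComponentIn hx
    have pos_of_notMem : ∀ γ : Module.Dual ℝ (Fin n → ℝ), γ ∈ I →
        γ ∉ chamberLabel n I (connectedComponentIn (idealComplement n I) x) →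
        ∀ y ∈ connectedComponentIn (idealComplement n I) x, 0 < γ y := by
      intro γ hγI hγnY
      have hnot : ¬ ∀ y ∈ connectedComponentIn (idealComplement n I) x, γ y < 0 :=
        fun h => hγnY ⟨hγI, h⟩
      push_neg at hnot
      obtain ⟨y, hy, hy0⟩ := hnot
      have hγx : 0 < γ x := by
        rcases sign_const hx hγI hy with ⟨_, h2⟩ | ⟨h1, _⟩
        · linarith
        · exact h1
      intro z hz
      rcases sign_const hx hγI hz with ⟨h1, _⟩ | ⟨_, h2⟩
      · linarith
      · exact h2
    refine ⟨fun α hα => hα.1, ?_, ?_⟩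
    · rintro α ⟨hαI, hαneg⟩ β ⟨hβI, hβneg⟩ hsum
      refine ⟨hsum, fun y hy => ?_⟩
      have h1 := hαneg y hy
      have h2 := hβneg y hy
      rw [LinearMap.add_apply]
      linarith
    · rintro γ ⟨hγI, hγnY⟩ δ ⟨hδI, hδnY⟩ _ hmem
      have h1 := pos_of_notMem γ hγI hγnY x hxC
      have h2 := pos_of_notMem δ hδI hδnY x hxC
      have h3 := hmem.2 x hxC
      rw [LinearMap.add_apply] at h3
      linarith
  have hbij : Set.BijOn (chamberLabel n I) (chambers n I) (weylTypeSubsets n I) := by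
    refine ⟨hmaps, hinj, ?_⟩
    intro Y hY
    obtain ⟨w, hw, rfl⟩ := hST Y hY
    obtain ⟨C, hC, hCeq⟩ := hsurj w hw
    exact ⟨C, hC, hCeq⟩
  exact ⟨hbij, Nat.card_congr (Set.BijOn.equiv _ hbij)⟩
end
end
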